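/- In Musical Chairs with M players on a set S of K ≥ M arms, at each round where r ≥ 1 players are still unfixed and f arms are occupied by fixed players (f = M − r), the probability that a given unfixed player pulls an arm occupied by no other player (fixed or unfixed) is at least ((K − M + 1)/K) · (1 − 1/K)^{r−1}. -/
import Mathlib

private lemma sigma_ext_aux {α : Type*} {p : α → Prop} {ι : Type*}
    (x y : Σ a : {a : α // p a}, (ι → {b : α // b ≠ a.1}))
    (h1 : x.1.1 = y.1.1) (h2 : ∀ i, (x.2 i).1 = (y.2 i).1) : x = y := by
  rcases x with ⟨a, g⟩
  rcases y with ⟨a', g'⟩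
  obtain rfl : a = a' := Subtype.ext h1
  congr 1
  funext i
  exact Subtype.ext (h2 i)



/-- Musical Chairs fixation probability: with `M ≤ K`, `r ≥ 1` unfixed players and
`M - r` arms occupied by fixed players (the set `F`), when the `r` unfixed players
sample arms independently and uniformly from the `K` arms, the probability that a
given unfixed player `p0` pulls an arm not occupied by a fixed player and not
sampled by any other unfixed player is at least `((K - M + 1)/K) · (1 - 1/K)^(r-1)`.
The probability is modelled by counting sample configurations `f : Fin r → Fin K`. -/
theorem musical_chairs_fixation_probability (M K r : ℕ) (hMK : M ≤ K)
    (hr : 1 ≤ r) (hrM : r ≤ M) (F : Finset (Fin K)) (hF : F.card = M - r)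
    (p0 : Fin r) :
    ((K - M + 1 : ℝ) / K) * (1 - 1 / (K : ℝ)) ^ (r - 1) ≤
      (Nat.card {f : Fin r → Fin K //
        f p0 ∉ F ∧ ∀ i, i ≠ p0 → f i ≠ f p0} : ℝ) / (K : ℝ) ^ r := by
  classical
  have hK : 1 ≤ K := le_trans (le_trans hr hrM) hMK
  have hK0 : (0:ℝ) < K := by exact_mod_cast hK
  have e : {f : Fin r → Fin K // f p0 ∉ F ∧ ∀ i, i ≠ p0 → f i ≠ f p0} ≃
      Σ a : {a : Fin K // a ∉ F}, ({i : Fin r // i ≠ p0} → {b : Fin K // b ≠ a.1}) :=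
    { toFun := fun f => ⟨⟨f.1 p0, f.2.1⟩, fun i => ⟨f.1 i.1, f.2.2 i.1 i.2⟩⟩
      invFun := fun x => ⟨fun i => if h : i = p0 then x.1.1 else (x.2 ⟨i, h⟩).1, by
        refine ⟨by simp [x.1.2], ?_⟩
        intro i hi
        simpa [hi] using (x.2 ⟨i, hi⟩).2⟩
      left_inv := fun f => by
        ext i
        by_cases h : i = p0 <;> simp [h]
      right_inv := fun x => by
        refine sigma_ext_aux _ _ ?_ ?_
        · simp
        · intro i
          simp [i.2] }
  have hcard : Nat.card {f : Fin r → Fin K // f p0 ∉ F ∧ ∀ i, i ≠ p0 → f i ≠ f p0}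
      = (K - (M - r)) * (K - 1) ^ (r - 1) := by
    rw [Nat.card_congr e]
    rw [Nat.card_eq_fintype_card, Fintype.card_sigma]
    have h1 : ∀ a : {a : Fin K // a ∉ F},
        Fintype.card ({i : Fin r // i ≠ p0} → {b : Fin K // b ≠ a.1})
          = (K - 1) ^ (r - 1) := by
      intro a
      rw [Fintype.card_fun]
      have hb : Fintype.card {b : Fin K // b ≠ a.1} = K - 1 := by
        simp [Fintype.card_subtype_compl]
      have hi : Fintype.card {i : Fin r // i ≠ p0} = r - 1 := by
        simp [Fintype.card_subtype_compl]
      rw [hb, hi]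
    simp only [h1, Finset.sum_const, smul_eq_mul, Finset.card_univ]
    congr 1
    have h5 : (Finset.filter (fun x => x ∉ F) Finset.univ) = Fᶜ := by
      ext x; simp
    rw [Fintype.card_subtype, h5, Finset.card_compl, Fintype.card_fin, hF]
  rw [hcard]
  clear hcard e
  have h2 : K - (M - r) = K - M + r := by omega
  rw [h2]
  have hKM : (M : ℝ) ≤ K := by exact_mod_cast hMK
  have hr1 : (1:ℝ) ≤ r := by exact_mod_cast hr
  have hcast : (((K - M + r) * (K-1)^(r-1) : ℕ) : ℝ)
      = ((K:ℝ) - M + r) * ((K:ℝ) - 1)^(r-1) := by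
    push_cast [hMK, hK]
    ring
  rw [hcast]
  have h4 : (1 - 1 / (K:ℝ)) = ((K:ℝ) - 1) / K := by field_simp
  have hrr : r - 1 + 1 = r := by omega
  have hpow : (K : ℝ) ^ r = K * K ^ (r - 1) := by
    conv_lhs => rw [← hrr]
    rw [pow_succ]; ring
  rw [h4, hpow, div_pow]
  rw [show ((K:ℝ) - M + r) * (((K:ℝ) - 1) ^ (r-1)) / (K * K ^ (r-1))
      = (((K:ℝ) - M + r) / K) * (((K:ℝ)-1)^(r-1) / (K:ℝ)^(r-1)) by
    field_simp]
  have hK' : (1:ℝ) ≤ K := by exact_mod_cast hK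
  have hK1 : (0:ℝ) ≤ (K:ℝ) - 1 := by linarith
  refine mul_le_mul_of_nonneg_right ?_ (by positivity)
  gcongr
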